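/- Let V, W, Z₁, Z₂ be Banach spaces satisfying V ⊕ Z₁ ≅ V ⊕ Z₂ and W ⊕ Z₁ ≅ W ⊕ Z₂, with Z₁ and Z₂ finite-dimensional and V, W essentially incomparable. Suppose there exists an invertible block operator T = [[I_V − B₁B₂, A₁₂],[A₂₁, A₂₂]] : V ⊕ Z₁ → V ⊕ Z₂ with B₁ ∈ B(W,V), B₂ ∈ B(V,W). Then dim Z₁ = dim Z₂. -/

import Mathlib

open Module

/-- A bounded operator between (semi)normed spaces is *Fredholm of index `k`* if it has closed
range, finite-dimensional kernel and finite-dimensional cokernel, with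
`dim ker - dim coker = k`. -/
def IsFredholmOfIndex {V W : Type*} [SeminormedAddCommGroup V] [NormedSpace ℂ V]
    [SeminormedAddCommGroup W] [NormedSpace ℂ W] (T : V →L[ℂ] W) (k : ℤ) : Prop :=
  IsClosed (LinearMap.range (T : V →ₗ[ℂ] W) : Set W) ∧ FiniteDimensional ℂ (LinearMap.ker (T : V →ₗ[ℂ] W)) ∧
    FiniteDimensional ℂ (W ⧸ LinearMap.range (T : V →ₗ[ℂ] W)) ∧
    (finrank ℂ (LinearMap.ker (T : V →ₗ[ℂ] W)) : ℤ) - finrank ℂ (W ⧸ LinearMap.range (T : V →ₗ[ℂ] W)) = k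

/-- A bounded operator between (semi)normed spaces is *Fredholm* if it has closed range and
finite-dimensional kernel and cokernel. -/
def IsFredholm {V W : Type*} [SeminormedAddCommGroup V] [NormedSpace ℂ V]
    [SeminormedAddCommGroup W] [NormedSpace ℂ W] (T : V →L[ℂ] W) : Prop :=
  IsClosed (LinearMap.range (T : V →ₗ[ℂ] W) : Set W) ∧ FiniteDimensional ℂ (LinearMap.ker (T : V →ₗ[ℂ] W)) ∧
    FiniteDimensional ℂ (W ⧸ LinearMap.range (T : V →ₗ[ℂ] W))

/-- `T ∈ B(G,H)` is *inessential* if `I_G - S T` is Fredholm for every `S ∈ B(H,G)`. -/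
def Inessential {G H : Type*} [SeminormedAddCommGroup G] [NormedSpace ℂ G]
    [SeminormedAddCommGroup H] [NormedSpace ℂ H] (T : G →L[ℂ] H) : Prop :=
  ∀ S : H →L[ℂ] G, IsFredholm (ContinuousLinearMap.id ℂ G - S.comp T)

/-! The corners `I - t • B₁B₂`, `t ∈ ℝ`, are all Fredholm because `B₂` is inessential. Near a
Fredholm corner `F`, the compression of the corner to a closed complement of `ker F`, projected
onto `range F` along a closed complement, stays invertible (invertibility is open), and a Schur
complement reduction then computes the index of the block operator as
`dim ker F + dim Z₁ - dim coker F - dim Z₂`. Hence the index of the block operator is locally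
constant, so constant, in `t`: at `t = 1` it is the invertible `T`, of index `0`, and at `t = 0`
the corner is the identity, giving index `dim Z₁ - dim Z₂`. -/

open Function Filter Topology

namespace Submodule

variable {R M N : Type*} [Ring R] [AddCommGroup M] [Module R M] [AddCommGroup N] [Module R N]

def prodEquiv (p : Submodule R M) (q : Submodule R N) : p.prod q ≃ₗ[R] p × q where
  toFun x := (⟨x.1.1, x.2.1⟩, ⟨x.1.2, x.2.2⟩)
  invFun y := ⟨(y.1, y.2), y.1.2, y.2.2⟩
  map_add' _ _ := rfl
  map_smul' _ _ := rfl

noncomputable def quotientProdEquiv (p : Submodule R M) (q : Submodule R N) :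
    ((M × N) ⧸ p.prod q) ≃ₗ[R] (M ⧸ p) × (N ⧸ q) :=
  (quotEquivOfEq _ _ (by simp)).trans
    ((p.mkQ.prodMap q.mkQ).quotKerEquivOfSurjective
      (Prod.map_surjective.mpr ⟨p.mkQ_surjective, q.mkQ_surjective⟩))

end Submodule

namespace LinearMap

variable {k X X' Y Y' P Q : Type*} [Field k] [AddCommGroup X] [Module k X]
  [AddCommGroup X'] [Module k X'] [AddCommGroup Y] [Module k Y] [AddCommGroup Y'] [Module k Y']
  [AddCommGroup P] [Module k P] [AddCommGroup Q] [Module k Q]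

theorem index_comp_linearEquiv (f : X →ₗ[k] Y) (e : X' ≃ₗ[k] X) :
    (f ∘ₗ e.toLinearMap).index = f.index := by
  rw [index, index, range_comp_of_range_eq_top _ e.range, ker_comp,
    Submodule.comap_equiv_eq_map_symm, LinearEquiv.finrank_map_eq]

theorem index_linearEquiv_comp (e : Y ≃ₗ[k] Y') (f : X →ₗ[k] Y) :
    (e.toLinearMap ∘ₗ f).index = f.index := by
  rw [index, index, LinearEquiv.ker_comp, range_comp,
    (Submodule.Quotient.equiv (range f) _ e rfl).finrank_eq]

theorem index_prodMap (f : X →ₗ[k] Y) (g : P →ₗ[k] Q)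
    [FiniteDimensional k (ker f)] [FiniteDimensional k (Y ⧸ range f)]
    [FiniteDimensional k (ker g)] [FiniteDimensional k (Q ⧸ range g)] :
    (f.prodMap g).index = f.index + g.index := by
  rw [index, index, index, ker_prodMap, range_prodMap,
    (Submodule.prodEquiv _ _).finrank_eq, (Submodule.quotientProdEquiv _ _).finrank_eq,
    finrank_prod, finrank_prod]
  push_cast
  ring

theorem index_eq_zero_of_bijective {f : X →ₗ[k] Y} (hf : Bijective f) : f.index = 0 :=
  (LinearEquiv.ofBijective f hf).index_eq_zero

theorem index_prodMap_of_bijective {a : X →ₗ[k] Y} (ha : Bijective a) (s : P →ₗ[k] Q)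
    [FiniteDimensional k (ker s)] [FiniteDimensional k (Q ⧸ range s)] :
    (a.prodMap s).index = s.index := by
  have : Subsingleton (ker a) := by rw [ker_eq_bot.mpr ha.1]; infer_instance
  have : Subsingleton (Y ⧸ range a) := by
    rw [range_eq_top.mpr ha.2]; exact Submodule.Quotient.subsingleton_iff.mpr rfl
  rw [index_prodMap, index_eq_zero_of_bijective ha, zero_add]

theorem index_eq_of_bijective_fst_comp_inl [FiniteDimensional k P] [FiniteDimensional k Q]
    (M : (X × P) →ₗ[k] (Y × Q)) (ha : Bijective (fst k Y Q ∘ₗ M ∘ₗ inl k X P)) :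
    M.index = finrank k P - finrank k Q := by
  set a := fst k Y Q ∘ₗ M ∘ₗ inl k X P
  set b := fst k Y Q ∘ₗ M ∘ₗ inr k X P
  set c := snd k Y Q ∘ₗ M ∘ₗ inl k X P
  set d := snd k Y Q ∘ₗ M ∘ₗ inr k X P
  set a' : Y →ₗ[k] X := (LinearEquiv.ofBijective a ha).symm.toLinearMap
  have ha' (y : Y) : (M (a' y, 0)).1 = y := (LinearEquiv.ofBijective a ha).apply_symm_apply y
  have ha'' (x : X) : a' (M (x, 0)).1 = x := (LinearEquiv.ofBijective a ha).symm_apply_apply x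
  let shearRight : (X × P) ≃ₗ[k] (X × P) := LinearEquiv.ofLinearMap
    ((fst k X P + a' ∘ₗ b ∘ₗ snd k X P).prod (snd k X P))
    ((fst k X P - a' ∘ₗ b ∘ₗ snd k X P).prod (snd k X P))
    (by ext <;> simp) (by ext <;> simp)
  let shearLeft : (Y × Q) ≃ₗ[k] (Y × Q) := LinearEquiv.ofLinearMap
    ((fst k Y Q).prod (snd k Y Q + c ∘ₗ a' ∘ₗ fst k Y Q))
    ((fst k Y Q).prod (snd k Y Q - c ∘ₗ a' ∘ₗ fst k Y Q))
    (by ext <;> simp) (by ext <;> simp)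
  let schurCompl := d - c ∘ₗ a' ∘ₗ b
  have hfactor : M = shearLeft.toLinearMap ∘ₗ a.prodMap schurCompl ∘ₗ
      shearRight.toLinearMap := by
    ext x <;> simp [shearLeft, shearRight, schurCompl, a, b, c, d, ha', ha'']
  rw [hfactor, index_linearEquiv_comp, index_comp_linearEquiv, index_prodMap_of_bijective ha,
    index_eq_of_finiteDimensional]

theorem index_eq_of_bijective_projectionOnto_comp
    {X₀ N : Submodule k X} (hX : IsCompl X₀ N) {R C : Submodule k Y} (hY : IsCompl R C)
    [FiniteDimensional k N] [FiniteDimensional k C] [FiniteDimensional k P] [FiniteDimensional k Q]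
    (M : (X × P) →ₗ[k] (Y × Q))
    (hM : Bijective (R.projectionOnto C hY ∘ₗ (fst k Y Q ∘ₗ M ∘ₗ inl k X P) ∘ₗ X₀.subtype)) :
    M.index = finrank k N + finrank k P - (finrank k C + finrank k Q) := by
  let E₁ : (X₀ × (N × P)) ≃ₗ[k] (X × P) := (LinearEquiv.prodAssoc k X₀ N P).symm ≪≫ₗ
    (Submodule.prodEquivOfIsCompl X₀ N hX).prodCongr (LinearEquiv.refl k P)
  let E₂ : (Y × Q) ≃ₗ[k] (R × (C × Q)) :=
    (Submodule.prodEquivOfIsCompl R C hY).symm.prodCongr (LinearEquiv.refl k Q) ≪≫ₗ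
      LinearEquiv.prodAssoc k R C Q
  have hcorner : fst k R (C × Q) ∘ₗ (E₂.toLinearMap ∘ₗ M ∘ₗ E₁.toLinearMap) ∘ₗ inl k X₀ (N × P) =
      R.projectionOnto C hY ∘ₗ (fst k Y Q ∘ₗ M ∘ₗ inl k X P) ∘ₗ X₀.subtype := by
    ext x
    have hassoc : (LinearEquiv.prodAssoc k X₀ N P).symm (x, 0) = ((x, 0), 0) := rfl
    simp [E₁, E₂, hassoc]
  have h := index_eq_of_bijective_fst_comp_inl (E₂.toLinearMap ∘ₗ M ∘ₗ E₁.toLinearMap)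
    (hcorner ▸ hM)
  rw [index_linearEquiv_comp, index_comp_linearEquiv] at h
  rw [h, finrank_prod, finrank_prod]
  push_cast
  ring

theorem bijective_projectionOnto_comp_subtype (F : X →ₗ[k] Y) {X₀ : Submodule k X}
    (hX : IsCompl (ker F) X₀) {C : Submodule k Y} (hY : IsCompl (range F) C) :
    Bijective ((range F).projectionOnto C hY ∘ₗ F ∘ₗ X₀.subtype) := by
  let e := ((ker F).quotientEquivOfIsCompl X₀ hX).symm.trans F.quotKerEquivRange
  have h : (range F).projectionOnto C hY ∘ₗ F ∘ₗ X₀.subtype = e.toLinearMap := by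
    ext x
    simp [e]
  rw [h]
  exact e.bijective

end LinearMap

theorem ContinuousLinearMap.eventually_bijective {𝕜 E F : Type*} [NontriviallyNormedField 𝕜]
    [NormedAddCommGroup E] [NormedSpace 𝕜 E] [CompleteSpace E]
    [NormedAddCommGroup F] [NormedSpace 𝕜 F] [CompleteSpace F]
    {a : E →L[𝕜] F} (ha : Bijective a) : ∀ᶠ b : E →L[𝕜] F in 𝓝 a, Bijective b := by
  let e := ContinuousLinearEquiv.ofBijective a (LinearMap.ker_eq_bot.mpr ha.1)
    (LinearMap.range_eq_top.mpr ha.2)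
  have he : (e : E →L[𝕜] F) = a := ContinuousLinearEquiv.coe_ofBijective _ _ _
  filter_upwards [he ▸ ContinuousLinearEquiv.nhds e] with b ⟨e', he'⟩
  exact he' ▸ e'.bijective

theorem Submodule.eventually_bijective_projectionOntoL_comp {𝕜 X Y : Type*}
    [NontriviallyNormedField 𝕜] [NormedAddCommGroup X] [NormedSpace 𝕜 X] [CompleteSpace X]
    [NormedAddCommGroup Y] [NormedSpace 𝕜 Y] [CompleteSpace Y]
    {X₀ : Submodule 𝕜 X} (hX₀ : IsClosed (X₀ : Set X)) {R C : Submodule 𝕜 Y} (hRC : R.IsTopCompl C)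
    {F : X →L[𝕜] Y} (hF : Bijective (R.projectionOntoL C hRC ∘L F ∘L X₀.subtypeL)) :
    ∀ᶠ G : X →L[𝕜] Y in 𝓝 F, Bijective (R.projectionOntoL C hRC ∘L G ∘L X₀.subtypeL) := by
  have : CompleteSpace X₀ := hX₀.completeSpace_coe
  have : CompleteSpace R := hRC.isClosed.completeSpace_coe
  have hcont : Continuous fun G : X →L[𝕜] Y => R.projectionOntoL C hRC ∘L G ∘L X₀.subtypeL :=
    continuous_const.clm_comp (continuous_id.clm_comp continuous_const)
  exact hcont.tendsto F |>.eventually (ContinuousLinearMap.eventually_bijective hF)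

section BlockOperator

variable {𝕜 X Y Z₁ Z₂ : Type*} [NontriviallyNormedField 𝕜]
  [NormedAddCommGroup X] [NormedSpace 𝕜 X] [NormedAddCommGroup Y] [NormedSpace 𝕜 Y]
  [NormedAddCommGroup Z₁] [NormedSpace 𝕜 Z₁] [NormedAddCommGroup Z₂] [NormedSpace 𝕜 Z₂]

def blockOperator (A₁₁ : X →L[𝕜] Y) (A₁₂ : Z₁ →L[𝕜] Y) (A₂₁ : X →L[𝕜] Z₂) (A₂₂ : Z₁ →L[𝕜] Z₂) :
    (X × Z₁) →L[𝕜] (Y × Z₂) :=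
  (A₁₁.coprod A₁₂).prod (A₂₁.coprod A₂₂)

theorem fst_comp_blockOperator_comp_inl (A₁₁ : X →L[𝕜] Y) (A₁₂ : Z₁ →L[𝕜] Y) (A₂₁ : X →L[𝕜] Z₂)
    (A₂₂ : Z₁ →L[𝕜] Z₂) :
    LinearMap.fst 𝕜 Y Z₂ ∘ₗ (blockOperator A₁₁ A₁₂ A₂₁ A₂₂ : (X × Z₁) →ₗ[𝕜] (Y × Z₂)) ∘ₗ
      LinearMap.inl 𝕜 X Z₁ = A₁₁ := by
  ext x
  simp [blockOperator]

end BlockOperator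

theorem IsFredholm.eventually_index_blockOperator_eq {X Y Z₁ Z₂ : Type*}
    [NormedAddCommGroup X] [NormedSpace ℂ X] [CompleteSpace X]
    [NormedAddCommGroup Y] [NormedSpace ℂ Y] [CompleteSpace Y]
    [NormedAddCommGroup Z₁] [NormedSpace ℂ Z₁] [FiniteDimensional ℂ Z₁]
    [NormedAddCommGroup Z₂] [NormedSpace ℂ Z₂] [FiniteDimensional ℂ Z₂]
    {F : X →L[ℂ] Y} (hF : IsFredholm F) (A₁₂ : Z₁ →L[ℂ] Y) (A₂₁ : X →L[ℂ] Z₂)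
    (A₂₂ : Z₁ →L[ℂ] Z₂) :
    ∀ᶠ G in 𝓝 F, (blockOperator G A₁₂ A₂₁ A₂₂ : (X × Z₁) →ₗ[ℂ] (Y × Z₂)).index =
      (blockOperator F A₁₂ A₂₁ A₂₂ : (X × Z₁) →ₗ[ℂ] (Y × Z₂)).index := by
  obtain ⟨hR, hker, hcoker⟩ := hF
  set N := LinearMap.ker (F : X →ₗ[ℂ] Y)
  set R := LinearMap.range (F : X →ₗ[ℂ] Y)
  obtain ⟨X₀, hX₀, hNX₀⟩ :=
    (Submodule.ClosedComplemented.of_finiteDimensional N).exists_isClosed_isCompl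
  obtain ⟨C, hRC⟩ :=
    (Submodule.ClosedComplemented.of_finiteDimensional_quotient hR).exists_isTopCompl
  have : FiniteDimensional ℂ C :=
    (Submodule.quotientEquivOfIsCompl _ C hRC.isCompl).finiteDimensional
  have hindex (G : X →L[ℂ] Y) (hG : Bijective (R.projectionOntoL C hRC ∘L G ∘L X₀.subtypeL)) :
      (blockOperator G A₁₂ A₂₁ A₂₂ : (X × Z₁) →ₗ[ℂ] (Y × Z₂)).index =
        finrank ℂ N + finrank ℂ Z₁ - (finrank ℂ C + finrank ℂ Z₂) :=
    LinearMap.index_eq_of_bijective_projectionOnto_comp hNX₀.symm hRC.isCompl _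
      (by rwa [fst_comp_blockOperator_comp_inl])
  have hFcompr := LinearMap.bijective_projectionOnto_comp_subtype (F : X →ₗ[ℂ] Y) hNX₀ hRC.isCompl
  filter_upwards [Submodule.eventually_bijective_projectionOntoL_comp hX₀ hRC hFcompr] with G hG
  rw [hindex G hG, hindex F hFcompr]

theorem dim_eq_of_block_invertible_essentially_incomparable_general (V : Type u) [NormedAddCommGroup V]
    [NormedSpace ℂ V] [CompleteSpace V]
    (W : Type u) [NormedAddCommGroup W] [NormedSpace ℂ W]
    (Z₁ : Type u) [NormedAddCommGroup Z₁] [NormedSpace ℂ Z₁] [FiniteDimensional ℂ Z₁]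
    (Z₂ : Type u) [NormedAddCommGroup Z₂] [NormedSpace ℂ Z₂] [FiniteDimensional ℂ Z₂]
    (hinc : ∀ T : V →L[ℂ] W, Inessential T)
    (B₁ : W →L[ℂ] V) (B₂ : V →L[ℂ] W) (A₁₂ : Z₁ →L[ℂ] V) (A₂₁ : V →L[ℂ] Z₂)
    (A₂₂ : Z₁ →L[ℂ] Z₂) (T : (V × Z₁) ≃L[ℂ] (V × Z₂))
    (hT : (T : (V × Z₁) →L[ℂ] (V × Z₂)) =
      (((ContinuousLinearMap.id ℂ V - B₁.comp B₂).coprod A₁₂).prod (A₂₁.coprod A₂₂))) :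
    finrank ℂ Z₁ = finrank ℂ Z₂ := by
  let G (t : ℝ) : V →L[ℂ] V := ContinuousLinearMap.id ℂ V - (t : ℂ) • B₁.comp B₂
  let blockIndex (t : ℝ) : ℤ := (blockOperator (G t) A₁₂ A₂₁ A₂₂ : (V × Z₁) →ₗ[ℂ] (V × Z₂)).index
  have hG : Continuous G := by fun_prop
  have hlocal : IsLocallyConstant blockIndex := by
    refine (IsLocallyConstant.iff_eventually_eq blockIndex).mpr fun t => ?_
    have hFred : IsFredholm (G t) := by
      simpa [G, ContinuousLinearMap.smul_comp] using hinc B₂ ((t : ℂ) • B₁)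
    exact hG.tendsto t |>.eventually (hFred.eventually_index_blockOperator_eq A₁₂ A₂₁ A₂₂)
  have hindex_one : blockIndex 1 = 0 := by
    have : blockOperator (G 1) A₁₂ A₂₁ A₂₂ = T := by simp [G, hT, blockOperator]
    simp only [blockIndex, this]
    exact T.toLinearEquiv.index_eq_zero
  have hindex_zero : blockIndex 0 = finrank ℂ Z₁ - finrank ℂ Z₂ :=
    LinearMap.index_eq_of_bijective_fst_comp_inl _
      (by simpa [fst_comp_blockOperator_comp_inl, G] using bijective_id)
  have := hlocal.apply_eq_of_isPreconnected isPreconnected_univ (Set.mem_univ 0) (Set.mem_univ 1)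
  omega

/-- If `V ⊕ Z₁ ≅ V ⊕ Z₂`, `W ⊕ Z₁ ≅ W ⊕ Z₂` with `Z₁, Z₂` finite-dimensional,
`V` and `W` essentially incomparable, and there is an invertible block operator
`[[I_V - B₁B₂, A₁₂],[A₂₁, A₂₂]] : V ⊕ Z₁ → V ⊕ Z₂` with `B₁ ∈ B(W,V)`, `B₂ ∈ B(V,W)`,
then `dim Z₁ = dim Z₂`. -/
theorem dim_eq_of_block_invertible_essentially_incomparable (V : Type u) [NormedAddCommGroup V]
    [NormedSpace ℂ V] [CompleteSpace V]
    (W : Type u) [NormedAddCommGroup W] [NormedSpace ℂ W] [CompleteSpace W]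
    (Z₁ : Type u) [NormedAddCommGroup Z₁] [NormedSpace ℂ Z₁] [FiniteDimensional ℂ Z₁]
    (Z₂ : Type u) [NormedAddCommGroup Z₂] [NormedSpace ℂ Z₂] [FiniteDimensional ℂ Z₂]
    (hVZ : Nonempty ((V × Z₁) ≃L[ℂ] (V × Z₂)))
    (hWZ : Nonempty ((W × Z₁) ≃L[ℂ] (W × Z₂)))
    (hinc : ∀ T : V →L[ℂ] W, Inessential T)
    (B₁ : W →L[ℂ] V) (B₂ : V →L[ℂ] W) (A₁₂ : Z₁ →L[ℂ] V) (A₂₁ : V →L[ℂ] Z₂)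
    (A₂₂ : Z₁ →L[ℂ] Z₂) (T : (V × Z₁) ≃L[ℂ] (V × Z₂))
    (hT : (T : (V × Z₁) →L[ℂ] (V × Z₂)) =
      (((ContinuousLinearMap.id ℂ V - B₁.comp B₂).coprod A₁₂).prod (A₂₁.coprod A₂₂))) :
    finrank ℂ Z₁ = finrank ℂ Z₂ :=
  dim_eq_of_block_invertible_essentially_incomparable_general V W Z₁ Z₂ hinc B₁ B₂ A₁₂ A₂₁ A₂₂ T hT
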